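/- arXiv:2207.00827 — 3 statements merged into one kernel-verified Lean document; each statement's English description precedes it below -/
import Mathlib

section
/- Let k be an odd positive natural number and let α be a real number with 1/2 < α ≤ 1. Then the probability that a Binomial(k, α) random variable exceeds k/2 is at least α; that is, ∑_{n = (k+1)/2}^{k} C(k, n) · α^n · (1 − α)^{k − n} ≥ α. -/
private lemma jury_key (m : ℕ) (α : ℝ) (hα : 1 / 2 < α) (hα1 : α ≤ 1) :
    ∑ i ∈ Finset.range (m + 1),
      ((2 * m + 1).choose (m + 1 + i) : ℝ) * α ^ (m + 1 + i) * (1 - α) ^ (m - i) ≥ α := by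
  set β : ℝ := 1 - α with hβ
  have hβ0 : 0 ≤ β := by simp [hβ]; linarith
  have hβα : β ≤ α := by simp [hβ]; linarith
  have hα0 : 0 ≤ α := le_trans hβ0 hβα
  -- binomial theorem
  have hbin : ∑ j ∈ Finset.range (2 * m + 1), α ^ j * β ^ (2 * m - j) * ((2 * m).choose j : ℝ) = 1 := by
    rw [← add_pow α β (2 * m)]
    simp [hβ]
  -- Pascal split of the sum
  have pascal : ∀ i ∈ Finset.range (m + 1),
      ((2 * m + 1).choose (m + 1 + i) : ℝ) * α ^ (m + 1 + i) * β ^ (m - i)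
      = ((2 * m).choose (m + 1 + i) : ℝ) * α ^ (m + 1 + i) * β ^ (m - i)
        + ((2 * m).choose (m + i) : ℝ) * α ^ (m + 1 + i) * β ^ (m - i) := by
    intro i _
    have h : (2 * m + 1).choose (m + i + 1) = (2 * m).choose (m + i) + (2 * m).choose (m + i + 1) :=
      Nat.choose_succ_succ (2 * m) (m + i)
    rw [show m + 1 + i = m + i + 1 by ring, h]
    push_cast
    ring
  rw [Finset.sum_congr rfl pascal, Finset.sum_add_distrib]
  -- first summand: top term vanishes
  have hA : ∑ i ∈ Finset.range (m + 1),
      ((2 * m).choose (m + 1 + i) : ℝ) * α ^ (m + 1 + i) * β ^ (m - i)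
      = ∑ i ∈ Finset.range m,
        ((2 * m).choose (m + 1 + i) : ℝ) * α ^ (m + 1 + i) * β ^ (m - i) := by
    rw [Finset.sum_range_succ]
    have : (2 * m).choose (m + 1 + m) = 0 := Nat.choose_eq_zero_of_lt (by omega)
    simp [this]
  -- second summand equals α * tail of binomial sum
  have hB : ∑ i ∈ Finset.range (m + 1),
      ((2 * m).choose (m + i) : ℝ) * α ^ (m + 1 + i) * β ^ (m - i)
      = α * ∑ i ∈ Finset.range (m + 1), α ^ (m + i) * β ^ (2 * m - (m + i)) * ((2 * m).choose (m + i) : ℝ) := by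
    rw [Finset.mul_sum]
    refine Finset.sum_congr rfl fun i hi => ?_
    have hi' : i ≤ m := by simpa using Nat.lt_succ_iff.mp (Finset.mem_range.mp hi)
    rw [show 2 * m - (m + i) = m - i by omega, show m + 1 + i = (m + i) + 1 by ring, pow_succ]
    ring
  -- split the binomial sum
  have hsplit : ∑ j ∈ Finset.range (2 * m + 1), α ^ j * β ^ (2 * m - j) * ((2 * m).choose j : ℝ)
      = (∑ j ∈ Finset.range m, α ^ j * β ^ (2 * m - j) * ((2 * m).choose j : ℝ))
        + ∑ i ∈ Finset.range (m + 1), α ^ (m + i) * β ^ (2 * m - (m + i)) * ((2 * m).choose (m + i) : ℝ) := by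
    rw [show 2 * m + 1 = m + (m + 1) by ring, Finset.sum_range_add]
  have hαeq : α = α * (∑ j ∈ Finset.range m, α ^ j * β ^ (2 * m - j) * ((2 * m).choose j : ℝ))
      + α * ∑ i ∈ Finset.range (m + 1), α ^ (m + i) * β ^ (2 * m - (m + i)) * ((2 * m).choose (m + i) : ℝ) := by
    rw [← mul_add, ← hsplit, hbin, mul_one]
  -- reflect the low part
  have hreflect : α * (∑ j ∈ Finset.range m, α ^ j * β ^ (2 * m - j) * ((2 * m).choose j : ℝ))
      = ∑ i ∈ Finset.range m, ((2 * m).choose (m + 1 + i) : ℝ) * α ^ (m - i) * β ^ (m + 1 + i) := by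
    rw [Finset.mul_sum, ← Finset.sum_range_reflect
      (fun j => α * (α ^ j * β ^ (2 * m - j) * ((2 * m).choose j : ℝ))) m]
    refine Finset.sum_congr rfl fun i hi => ?_
    have hi' : i < m := Finset.mem_range.mp hi
    have hc : (2 * m).choose (m - 1 - i) = (2 * m).choose (m + 1 + i) := by
      rw [show m - 1 - i = 2 * m - (m + 1 + i) by omega]
      exact Nat.choose_symm (by omega)
    rw [hc, show 2 * m - (m - 1 - i) = m + 1 + i by omega,
      show m - i = (m - 1 - i) + 1 by omega, pow_succ]
    ring
  rw [hA, hB, ge_iff_le]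
  nth_rewrite 1 [hαeq]
  rw [hreflect]
  have : ∀ i ∈ Finset.range m,
      ((2 * m).choose (m + 1 + i) : ℝ) * α ^ (m - i) * β ^ (m + 1 + i)
      ≤ ((2 * m).choose (m + 1 + i) : ℝ) * α ^ (m + 1 + i) * β ^ (m - i) := by
    intro i hi
    have hi' : i < m := Finset.mem_range.mp hi
    have hexp : m + 1 + i = (m - i) + (2 * i + 1) := by omega
    have hpow : β ^ (2 * i + 1) ≤ α ^ (2 * i + 1) := pow_le_pow_left₀ hβ0 hβα _
    have h1 : α ^ (m - i) * β ^ (m + 1 + i) = (α * β) ^ (m - i) * β ^ (2 * i + 1) := by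
      rw [hexp, pow_add, mul_pow]; ring
    have h2 : α ^ (m + 1 + i) * β ^ (m - i) = (α * β) ^ (m - i) * α ^ (2 * i + 1) := by
      rw [hexp, pow_add, mul_pow]; ring
    have hc0 : (0 : ℝ) ≤ ((2 * m).choose (m + 1 + i) : ℝ) := Nat.cast_nonneg _
    have hab : (0 : ℝ) ≤ (α * β) ^ (m - i) := pow_nonneg (mul_nonneg hα0 hβ0) _
    rw [mul_assoc, mul_assoc, h1, h2]
    exact mul_le_mul_of_nonneg_left (mul_le_mul_of_nonneg_left hpow hab) hc0
  linarith [Finset.sum_le_sum this]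

/-- Condorcet's Jury Theorem inequality: for odd `k` and `1/2 < α ≤ 1`, the
probability that a `Binomial(k, α)` random variable exceeds `k/2` is at least `α`. -/
theorem majority_vote_binomial_ge (k : ℕ) (hk : Odd k) (hkpos : 0 < k)
    (α : ℝ) (hα : 1 / 2 < α) (hα1 : α ≤ 1) :
    ∑ n ∈ Finset.Icc ((k + 1) / 2) k,
      (k.choose n : ℝ) * α ^ n * (1 - α) ^ (k - n) ≥ α := by
  obtain ⟨m, rfl⟩ := hk
  have h2 : (2 * m + 1 + 1) / 2 = m + 1 := by omega
  rw [h2, ← Finset.Ico_add_one_right_eq_Icc, Finset.sum_Ico_eq_sum_range,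
    show 2 * m + 1 + 1 - (m + 1) = m + 1 by omega]
  have := jury_key m α hα hα1
  refine le_of_le_of_eq this (Finset.sum_congr rfl fun i hi => ?_)
  have hi' : i ≤ m := Nat.lt_succ_iff.mp (Finset.mem_range.mp hi)
  rw [show m + 1 + i = i + (m + 1) by ring] at *
  rw [show 2 * m + 1 - (i + (m + 1)) = m - i by omega]
end

section
/- Let (Ω, 𝒫) be a probability space, let k be an odd positive natural number, let α be a real number with 1/2 < α ≤ 1, and let X_1, …, X_k : Ω → {0, 1} be mutually independent random variables with 𝒫(X_j = 1) = α for every j. Then 𝒫( ∑_{j=1}^k X_j > k/2 ) ≥ α. -/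
/-!
The outcome of the vote is determined by the set `t` of markers that are correct, and by
independence this set has law `P(t) = α^|t| (1-α)^(k-|t|)`. Complementation `t ↦ tᶜ` maps the
minority sets bijectively onto the majority sets (as `k` is odd) and exchanges the roles of `α`
and `1 - α`; since `1 - α ≤ α`, each minority set is at most `(1-α)/α` times as likely as its
complement. Hence `α · P(minority) ≤ (1 - α) · P(majority)`, which together with
`P(minority) + P(majority) = 1` gives `P(majority) ≥ α`.
-/

open MeasureTheory ProbabilityTheory Finset

lemma mul_pow_mul_pow_le_of_lt {R : Type*} [CommSemiring R] [PartialOrder R]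
    [IsOrderedRing R] {a b : R} (hb : 0 ≤ b) (hba : b ≤ a) {m n : ℕ} (hmn : m < n) :
    a * (a ^ m * b ^ n) ≤ b * (a ^ n * b ^ m) := by
  obtain ⟨d, rfl⟩ := Nat.exists_eq_add_of_lt hmn
  have hab : 0 ≤ a ^ (m + 1) * b ^ (m + 1) := by have := hb.trans hba; positivity
  calc a * (a ^ m * b ^ (m + d + 1)) = a ^ (m + 1) * b ^ (m + 1) * b ^ d := by ring
    _ ≤ a ^ (m + 1) * b ^ (m + 1) * a ^ d := by gcongr
    _ = b * (a ^ (m + d + 1) * b ^ m) := by ring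

theorem le_sum_majority_pow_mul_pow {ι : Type*} [Fintype ι] (hι : Odd (Fintype.card ι)) {α : ℝ}
    (hα : 1 / 2 < α) (hα1 : α ≤ 1) :
    α ≤ ∑ t : Finset ι with Fintype.card ι < 2 * #t,
      α ^ #t * (1 - α) ^ (Fintype.card ι - #t) := by
  classical
  set n := Fintype.card ι
  set w : Finset ι → ℝ := fun t => α ^ #t * (1 - α) ^ (n - #t)
  set S := ∑ t : Finset ι with n < 2 * #t, w t
  set N := ∑ t : Finset ι with ¬ n < 2 * #t, w t
  have hSN : S + N = 1 := by
    rw [sum_filter_add_sum_filter_not, Fintype.sum_pow_mul_eq_add_pow]; simp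
  have hN : N = ∑ t : Finset ι with n < 2 * #t, α ^ (n - #t) * (1 - α) ^ #t := by
    have hcard (t : Finset ι) : #tᶜ = n - #t := card_compl t
    have hle (t : Finset ι) : #t ≤ n := card_le_univ t
    obtain ⟨m, hm⟩ := hι
    refine sum_nbij' compl compl (fun t ht => ?_) (fun t ht => ?_) (by simp) (by simp)
      fun t ht => ?_
    · simp only [mem_filter_univ, hcard] at ht ⊢
      have := hle t; omega
    · simp only [mem_filter_univ, hcard] at ht ⊢
      have := hle t; omega
    · rw [hcard, Nat.sub_sub_self (hle t)]
  have hNS : α * N ≤ (1 - α) * S := by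
    rw [hN, mul_sum, mul_sum]
    refine sum_le_sum fun t ht => ?_
    have := card_le_univ t
    rw [mem_filter_univ] at ht
    exact mul_pow_mul_pow_le_of_lt (by linarith) (by linarith) (by omega)
  calc α = α * S + α * N := by rw [← mul_add, hSN, mul_one]
    _ ≤ α * S + (1 - α) * S := by gcongr
    _ = S := by ring

section Bernoulli

variable {Ω ι : Type*} [Fintype ι] {X : ι → Ω → ℕ}

lemma sum_eq_card_filter_eq_one {ω : Ω} (hval : ∀ j, X j ω = 0 ∨ X j ω = 1) :
    ∑ j, X j ω = #{j | X j ω = 1} := by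
  rw [card_filter]
  refine sum_congr rfl fun j _ => ?_
  rcases hval j with h | h <;> simp [h]

variable [DecidableEq ι]

lemma setOf_filter_eq_one_eq_iInter (hval : ∀ j ω, X j ω = 0 ∨ X j ω = 1) (t : Finset ι) :
    {ω | ({j | X j ω = 1} : Finset ι) = t} = ⋂ j, X j ⁻¹' {if j ∈ t then 1 else 0} := by
  ext ω
  simp only [Set.mem_ofPred_eq, Set.mem_iInter, Set.mem_preimage, Set.mem_singleton_iff,
    Finset.ext_iff, mem_filter_univ]
  refine forall_congr' fun j => ?_
  rcases hval j ω with h | h <;> split_ifs <;> simp_all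

variable [MeasurableSpace Ω] {μ : Measure Ω} [IsProbabilityMeasure μ]

lemma measure_eq_zero_eq_ofReal_one_sub {f : Ω → ℕ} (hf : Measurable f)
    (hval : ∀ ω, f ω = 0 ∨ f ω = 1) {α : ℝ} (hα : 0 ≤ α)
    (hprob : μ {ω | f ω = 1} = ENNReal.ofReal α) :
    μ {ω | f ω = 0} = ENNReal.ofReal (1 - α) := by
  have hcompl : {ω | f ω = 0} = {ω | f ω = 1}ᶜ := by
    ext ω
    rcases hval ω with h | h <;> simp [h]
  rw [hcompl, prob_compl_eq_one_sub (s := {ω | f ω = 1}) (hf (measurableSet_singleton 1)),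
    hprob, ENNReal.ofReal_sub 1 hα, ENNReal.ofReal_one]

theorem measure_filter_eq_one_eq_ofReal (hX : ∀ j, Measurable (X j))
    (hval : ∀ j ω, X j ω = 0 ∨ X j ω = 1) (hindep : iIndepFun X μ) {α : ℝ} (hα : 0 ≤ α)
    (hα1 : α ≤ 1) (hprob : ∀ j, μ {ω | X j ω = 1} = ENNReal.ofReal α) (t : Finset ι) :
    μ {ω | ({j | X j ω = 1} : Finset ι) = t} =
      ENNReal.ofReal (α ^ #t * (1 - α) ^ (Fintype.card ι - #t)) := by
  have hprob0 j := measure_eq_zero_eq_ofReal_one_sub (hX j) (hval j) hα (hprob j)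
  rw [setOf_filter_eq_one_eq_iInter hval,
    hindep.meas_iInter fun j => ⟨_, measurableSet_singleton _, rfl⟩]
  have hfactor j : μ (X j ⁻¹' {if j ∈ t then 1 else 0}) =
      if j ∈ t then ENNReal.ofReal α else ENNReal.ofReal (1 - α) := by
    split_ifs
    exacts [hprob j, hprob0 j]
  rw [prod_congr rfl fun j _ => hfactor j, prod_ite, prod_const, prod_const, filter_univ_mem,
    filter_not, filter_univ_mem, ← compl_eq_univ_sdiff, card_compl,
    ENNReal.ofReal_mul (by positivity), ENNReal.ofReal_pow hα, ENNReal.ofReal_pow (by linarith)]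

theorem ofReal_le_measure_majority (hk : Odd (Fintype.card ι)) (hX : ∀ j, Measurable (X j))
    (hval : ∀ j ω, X j ω = 0 ∨ X j ω = 1) (hindep : iIndepFun X μ) {α : ℝ} (hα : 1 / 2 < α)
    (hα1 : α ≤ 1) (hprob : ∀ j, μ {ω | X j ω = 1} = ENNReal.ofReal α) :
    ENNReal.ofReal α ≤ μ {ω | Fintype.card ι < 2 * ∑ j, X j ω} := by
  have hα0 : 0 ≤ α := by linarith
  set majority : Finset (Finset ι) := {t | Fintype.card ι < 2 * #t}
  have hevent : {ω | Fintype.card ι < 2 * ∑ j, X j ω} =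
      (fun ω => ({j | X j ω = 1} : Finset ι)) ⁻¹' majority := by
    ext ω
    simp [majority, sum_eq_card_filter_eq_one (hval · ω)]
  have hfiber t : MeasurableSet {ω | ({j | X j ω = 1} : Finset ι) = t} := by
    rw [setOf_filter_eq_one_eq_iInter hval]
    exact .iInter fun j => hX j (measurableSet_singleton _)
  rw [hevent, ← sum_measure_preimage_singleton majority fun t _ => hfiber t]
  calc ENNReal.ofReal α
      ≤ ENNReal.ofReal (∑ t ∈ majority, α ^ #t * (1 - α) ^ (Fintype.card ι - #t)) :=
        ENNReal.ofReal_le_ofReal (le_sum_majority_pow_mul_pow hk hα hα1)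
    _ = ∑ t ∈ majority, ENNReal.ofReal (α ^ #t * (1 - α) ^ (Fintype.card ι - #t)) :=
        ENNReal.ofReal_sum_of_nonneg fun t _ =>
          mul_nonneg (pow_nonneg hα0 _) (pow_nonneg (by linarith) _)
    _ = _ := sum_congr rfl fun t _ =>
        (measure_filter_eq_one_eq_ofReal hX hval hindep hα0 hα1 hprob t).symm

end Bernoulli

theorem majority_vote_correct_prob_ge_general {Ω : Type*} [MeasureSpace Ω]
    [IsProbabilityMeasure (ℙ : Measure Ω)]
    (k : ℕ) (hk : Odd k)
    (α : ℝ) (hα : 1 / 2 < α) (hα1 : α ≤ 1)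
    (X : Fin k → Ω → ℕ) (hXmeas : ∀ j, Measurable (X j))
    (hXval : ∀ j ω, X j ω = 0 ∨ X j ω = 1)
    (hindep : iIndepFun X ℙ)
    (hprob : ∀ j, ℙ {ω | X j ω = 1} = ENNReal.ofReal α) :
    ℙ {ω | (k : ℝ) / 2 < (∑ j, X j ω : ℕ)} ≥ ENNReal.ofReal α := by
  have hevent : {ω | (k : ℝ) / 2 < (∑ j, X j ω : ℕ)} = {ω | k < 2 * ∑ j, X j ω} := by
    ext ω
    simp only [Set.mem_ofPred_eq, div_lt_iff₀ (two_pos : (0 : ℝ) < 2), mul_comm _ (2 : ℝ)]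
    norm_cast
  rw [hevent]
  simpa using ofReal_le_measure_majority (by simpa using hk) hXmeas hXval hindep hα hα1 hprob

/-- Condorcet's Jury Theorem: if `k` is odd and `X₁, …, X_k` are mutually independent
`{0,1}`-valued random variables, each equal to `1` with probability `α > 1/2`, then the
probability that more than `k/2` of them equal `1` is at least `α`. -/
theorem majority_vote_correct_prob_ge {Ω : Type*} [MeasureSpace Ω]
    [IsProbabilityMeasure (ℙ : Measure Ω)]
    (k : ℕ) (hk : Odd k) (hkpos : 0 < k)
    (α : ℝ) (hα : 1 / 2 < α) (hα1 : α ≤ 1)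
    (X : Fin k → Ω → ℕ) (hXmeas : ∀ j, Measurable (X j))
    (hXval : ∀ j ω, X j ω = 0 ∨ X j ω = 1)
    (hindep : iIndepFun X ℙ)
    (hprob : ∀ j, ℙ {ω | X j ω = 1} = ENNReal.ofReal α) :
    ℙ {ω | (k : ℝ) / 2 < (∑ j, X j ω : ℕ)} ≥ ENNReal.ofReal α :=
  majority_vote_correct_prob_ge_general k hk α hα hα1 X hXmeas hXval hindep hprob
end

section
/- Let k be an odd positive natural number and let α be a real number with 1/2 ≤ α ≤ 1. Define M_k(α) = ∑_{n = (k+1)/2}^{k} C(k, n) · α^n · (1 − α)^{k − n}. Then M_{k+2}(α) ≥ M_k(α). -/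
/-- The probability that a majority of `k` independent voters, each correct with
probability `α`, votes correctly. -/
noncomputable def majorityProb (k : ℕ) (α : ℝ) : ℝ :=
  ∑ n ∈ Finset.Icc ((k + 1) / 2) k, (k.choose n : ℝ) * α ^ n * (1 - α) ^ (k - n)

/-- Induction step of Condorcet's Jury Theorem: adding two more voters of the same
accuracy `α ≥ 1/2` does not decrease the probability that the majority vote is correct. -/
theorem majorityProb_add_two_ge (k : ℕ) (hk : Odd k) (hkpos : 0 < k)
    (α : ℝ) (hα : 1 / 2 ≤ α) (hα1 : α ≤ 1) :
    majorityProb (k + 2) α ≥ majorityProb k α := by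
  obtain ⟨t, rfl⟩ := hk
  set β : ℝ := 1 - α with hβ
  set C : ℕ → ℝ := fun j => ((2 * t + 1).choose j : ℝ) with hC
  have hsum : ∀ (m n : ℕ) (f : ℕ → ℝ),
      ∑ i ∈ Finset.Icc m n, f i = ∑ i ∈ Finset.range (n + 1 - m), f (m + i) := by
    intro m n f
    rw [← Finset.Ico_add_one_right_eq_Icc, Finset.sum_Ico_eq_sum_range]
  -- M_k as a range sum
  have hMk : majorityProb (2 * t + 1) α
      = ∑ i ∈ Finset.range (t + 1), C (t + 1 + i) * α ^ (t + 1 + i) * β ^ (t - i) := by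
    unfold majorityProb
    rw [hsum]
    rw [show (2 * t + 1 + 1) / 2 = t + 1 by omega,
        show 2 * t + 1 + 1 - (t + 1) = t + 1 by omega]
    refine Finset.sum_congr rfl fun i hi => ?_
    simp only [Finset.mem_range] at hi
    rw [show 2 * t + 1 - (t + 1 + i) = t - i by omega]
  set S : ℝ := ∑ i ∈ Finset.range (t + 1), C (t + 1 + i) * α ^ (t + 1 + i) * β ^ (t - i)
    with hS
  -- Pascal expansion of the binomial coefficient
  have hD : ∀ i : ℕ, ((2 * t + 1 + 2).choose (t + 2 + i) : ℝ)
      = C (t + i) + 2 * C (t + 1 + i) + C (t + 2 + i) := by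
    intro i
    have e2 : (2 * t + 1 + 2).choose (t + 2 + i)
        = (2 * t + 1).choose (t + i) + 2 * (2 * t + 1).choose (t + 1 + i)
          + (2 * t + 1).choose (t + 2 + i) := by
      have q0 := Nat.choose_succ_succ' (2 * t + 2) (t + 1 + i)
      have q1 := Nat.choose_succ_succ' (2 * t + 1) (t + i)
      have q2 := Nat.choose_succ_succ' (2 * t + 1) (t + 1 + i)
      simp only [show t + 1 + i + 1 = t + 2 + i from by omega,
        show t + i + 1 = t + 1 + i from by omega,
        show 2 * t + 2 + 1 = 2 * t + 1 + 2 from by omega,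
        show 2 * t + 1 + 1 = 2 * t + 2 from by omega] at q0 q1 q2
      omega
    rw [e2]
    push_cast
    simp only [hC]
  -- M_{k+2} as a range sum, with Pascal expansion
  have hMk2 : majorityProb (2 * t + 1 + 2) α
      = ∑ i ∈ Finset.range (t + 2),
          (C (t + i) + 2 * C (t + 1 + i) + C (t + 2 + i)) * α ^ (t + 2 + i) * β ^ (t + 1 - i) := by
    unfold majorityProb
    rw [hsum]
    rw [show (2 * t + 1 + 2 + 1) / 2 = t + 2 by omega,
        show 2 * t + 1 + 2 + 1 - (t + 2) = t + 2 by omega]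
    refine Finset.sum_congr rfl fun i hi => ?_
    simp only [Finset.mem_range] at hi
    rw [show 2 * t + 1 + 2 - (t + 2 + i) = t + 1 - i by omega, hD i]
  -- split into three sums
  have hsplit : majorityProb (2 * t + 1 + 2) α
      = (∑ i ∈ Finset.range (t + 2), C (t + i) * α ^ (t + 2 + i) * β ^ (t + 1 - i))
      + 2 * (∑ i ∈ Finset.range (t + 2), C (t + 1 + i) * α ^ (t + 2 + i) * β ^ (t + 1 - i))
      + (∑ i ∈ Finset.range (t + 2), C (t + 2 + i) * α ^ (t + 2 + i) * β ^ (t + 1 - i)) := by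
    rw [hMk2, Finset.mul_sum, ← Finset.sum_add_distrib, ← Finset.sum_add_distrib]
    exact Finset.sum_congr rfl fun i hi => by ring
  -- first sum
  have hA : (∑ i ∈ Finset.range (t + 2), C (t + i) * α ^ (t + 2 + i) * β ^ (t + 1 - i))
      = α ^ 2 * S + C t * α ^ (t + 2) * β ^ (t + 1) := by
    rw [Finset.sum_range_succ']
    have heq : (∑ i ∈ Finset.range (t + 1),
        C (t + (i + 1)) * α ^ (t + 2 + (i + 1)) * β ^ (t + 1 - (i + 1))) = α ^ 2 * S := by
      rw [hS, Finset.mul_sum]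
      refine Finset.sum_congr rfl fun i hi => ?_
      simp only [Finset.mem_range] at hi
      rw [show t + 1 - (i + 1) = t - i by omega, show t + (i + 1) = t + 1 + i by omega]
      ring
    rw [heq]
    norm_num
  -- second sum
  have hB : (∑ i ∈ Finset.range (t + 2), C (t + 1 + i) * α ^ (t + 2 + i) * β ^ (t + 1 - i))
      = α * β * S := by
    rw [Finset.sum_range_succ]
    have hz : C (t + 1 + (t + 1)) = 0 := by
      simp only [hC]
      rw [Nat.choose_eq_zero_of_lt (by omega)]
      norm_num
    rw [hz, hS, Finset.mul_sum]
    simp only [zero_mul, mul_zero, add_zero]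
    refine Finset.sum_congr rfl fun i hi => ?_
    simp only [Finset.mem_range] at hi
    rw [show t + 1 - i = (t - i) + 1 by omega]
    ring
  -- third sum
  have hCc : (∑ i ∈ Finset.range (t + 2), C (t + 2 + i) * α ^ (t + 2 + i) * β ^ (t + 1 - i))
      = β ^ 2 * (S - C (t + 1) * α ^ (t + 1) * β ^ t) := by
    rw [Finset.sum_range_succ]
    have hz1 : C (t + 2 + (t + 1)) = 0 := by
      simp only [hC]; rw [Nat.choose_eq_zero_of_lt (by omega)]; norm_num
    rw [hz1, Finset.sum_range_succ]
    have hz2 : C (t + 2 + t) = 0 := by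
      simp only [hC]; rw [Nat.choose_eq_zero_of_lt (by omega)]; norm_num
    rw [hz2]
    simp only [zero_mul, mul_zero, add_zero]
    have hS' : S = (∑ i ∈ Finset.range t, C (t + 2 + i) * α ^ (t + 2 + i) * β ^ (t - 1 - i))
        + C (t + 1) * α ^ (t + 1) * β ^ t := by
      rw [hS, Finset.sum_range_succ']
      have heq : (∑ i ∈ Finset.range t,
          C (t + 1 + (i + 1)) * α ^ (t + 1 + (i + 1)) * β ^ (t - (i + 1)))
          = ∑ i ∈ Finset.range t, C (t + 2 + i) * α ^ (t + 2 + i) * β ^ (t - 1 - i) := by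
        refine Finset.sum_congr rfl fun i hi => ?_
        simp only [Finset.mem_range] at hi
        rw [show t - (i + 1) = t - 1 - i by omega, show t + 1 + (i + 1) = t + 2 + i by omega]
      rw [heq]
      norm_num
    rw [hS', add_sub_cancel_right, Finset.mul_sum]
    refine Finset.sum_congr rfl fun i hi => ?_
    simp only [Finset.mem_range] at hi
    rw [show t + 1 - i = (t - 1 - i) + 2 by omega]
    ring
  -- combine
  have hαβ : α + β = 1 := by rw [hβ]; ring
  have hCt : C t = C (t + 1) := by
    simp only [hC]
    congr 1
    rw [← Nat.choose_symm (show t ≤ 2 * t + 1 by omega)]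
    congr 1
    omega
  have h1 : α ^ 2 + 2 * (α * β) + β ^ 2 = 1 := by nlinarith [hαβ]
  have hfinal : majorityProb (2 * t + 1 + 2) α
      = S + C (t + 1) * α ^ (t + 1) * β ^ (t + 1) * (α - β) := by
    rw [hsplit, hA, hB, hCc, hCt]
    linear_combination S * h1
  rw [ge_iff_le, hMk, hfinal]
  have hα0 : (0:ℝ) ≤ α := by linarith
  have hβ0 : (0:ℝ) ≤ β := by rw [hβ]; linarith
  have hd : (0:ℝ) ≤ α - β := by rw [hβ]; linarith
  have hnn : 0 ≤ C (t + 1) * α ^ (t + 1) * β ^ (t + 1) * (α - β) := by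
    apply mul_nonneg (mul_nonneg (mul_nonneg ?_ (pow_nonneg hα0 _)) (pow_nonneg hβ0 _)) hd
    simp only [hC]
    positivity
  linarith
end
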